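/- Suppose a sequence a : ℕ → ℝ of positive reals satisfies a(n) = C·n^{-5/4}·e^{π√(2n/3)}·(1 + ε(n)) for some constant C > 0, where ε(n) → 0 as n → ∞. Then for all sufficiently large n₁ and n₂, the convexity inequality a(n₁)·a(n₂) > a(n₁ + n₂) holds. -/
import Mathlib

open Filter Real

private lemma sqrt_key {x y : ℝ} (hx : 0 ≤ x) (hxy : x ≤ y) :
    Real.sqrt (2*(x+y)/3) ≤ Real.sqrt (2*x/3)/2 + Real.sqrt (2*y/3) := by
  have hy : 0 ≤ y := hx.trans hxy
  have hu := Real.sq_sqrt (by positivity : (0:ℝ) ≤ 2*x/3)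
  have hv := Real.sq_sqrt (by positivity : (0:ℝ) ≤ 2*y/3)
  have huv : Real.sqrt (2*x/3) ≤ Real.sqrt (2*y/3) := Real.sqrt_le_sqrt (by linarith)
  have hu0 : 0 ≤ Real.sqrt (2*x/3) := Real.sqrt_nonneg _
  have hv0 : 0 ≤ Real.sqrt (2*y/3) := Real.sqrt_nonneg _
  have h2 : 2*(x+y)/3 ≤ (Real.sqrt (2*x/3)/2 + Real.sqrt (2*y/3))^2 := by nlinarith
  calc Real.sqrt (2*(x+y)/3)
      ≤ Real.sqrt ((Real.sqrt (2*x/3)/2 + Real.sqrt (2*y/3))^2) := Real.sqrt_le_sqrt h2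
    _ = _ := Real.sqrt_sq (by positivity)

private lemma growth {C : ℝ} (hC : 0 < C) :
    ∀ᶠ n : ℕ in atTop,
      6 < C * (n : ℝ) ^ (-(5:ℝ)/4) * Real.exp (π/2 * Real.sqrt (2*n/3)) := by
  have hb : 0 < π/2 * Real.sqrt (2/3) := by
    have := Real.pi_pos
    positivity
  have h1 : Tendsto (fun t : ℝ => Real.exp ((π/2 * Real.sqrt (2/3)) * t) / t ^ ((5:ℝ)/2))
      atTop atTop := tendsto_exp_mul_div_rpow_atTop _ _ hb
  have hsq : Tendsto (fun n : ℕ => Real.sqrt (n : ℝ)) atTop atTop := by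
    have : Tendsto (fun t : ℝ => t ^ ((1:ℝ)/2)) atTop atTop :=
      tendsto_rpow_atTop (by norm_num)
    refine (this.comp tendsto_natCast_atTop_atTop).congr fun n => ?_
    simp [Real.sqrt_eq_rpow]
  have h2 := (h1.comp hsq).const_mul_atTop hC
  filter_upwards [h2.eventually_gt_atTop 6, eventually_ge_atTop 1] with n hn hn1
  have hn0 : (0:ℝ) < (n:ℝ) := by exact_mod_cast hn1
  have e1 : Real.sqrt (2*(n:ℝ)/3) = Real.sqrt (2/3) * Real.sqrt (n:ℝ) := by
    rw [← Real.sqrt_mul (by norm_num : (0:ℝ) ≤ 2/3)]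
    ring_nf
  have e2 : (Real.sqrt (n:ℝ)) ^ ((5:ℝ)/2) = (n:ℝ) ^ ((5:ℝ)/4) := by
    rw [Real.sqrt_eq_rpow, ← Real.rpow_mul hn0.le]
    norm_num
  have e3 : (n:ℝ) ^ (-(5:ℝ)/4) = ((n:ℝ) ^ ((5:ℝ)/4))⁻¹ := by
    rw [← Real.rpow_neg hn0.le]; norm_num
  calc (6:ℝ) < C * ((fun t : ℝ => Real.exp ((π/2 * Real.sqrt (2/3)) * t) / t ^ ((5:ℝ)/2))
        (Real.sqrt (n:ℝ))) := hn
    _ = C * (n:ℝ) ^ (-(5:ℝ)/4) * Real.exp (π/2 * Real.sqrt (2*n/3)) := by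
        simp only [e1, e3, ← e2]
        rw [div_eq_mul_inv, mul_comm (π/2) (Real.sqrt (2/3) * Real.sqrt (n:ℝ))]
        ring_nf

set_option maxHeartbeats 1000000 in
/-- If `a(n) = C n^{-5/4} e^{π√(2n/3)} (1 + ε(n))` with `C > 0` and `ε(n) → 0`, then
`a(n₁) a(n₂) > a(n₁ + n₂)` for all sufficiently large `n₁, n₂`. -/
theorem eventual_convexity (a : ℕ → ℝ) (ha : ∀ n, 0 < a n) (C : ℝ) (hC : 0 < C)
    (ε : ℕ → ℝ) (hε : Tendsto ε atTop (nhds 0))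
    (hasymp : ∀ n : ℕ, 1 ≤ n →
      a n = C * (n : ℝ) ^ (-(5 : ℝ) / 4) * Real.exp (π * Real.sqrt (2 * n / 3)) * (1 + ε n)) :
    ∃ N : ℕ, ∀ n₁ ≥ N, ∀ n₂ ≥ N, a n₁ * a n₂ > a (n₁ + n₂) := by
  -- bound on ε
  have hεb : ∀ᶠ n : ℕ in atTop, |ε n| ≤ 1/2 := by
    have := hε.eventually (Metric.ball_mem_nhds (0:ℝ) (by norm_num : (0:ℝ) < 1/2))
    filter_upwards [this] with n hn
    simpa [Real.dist_eq] using le_of_lt hn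
  obtain ⟨N, hN⟩ := Filter.eventually_atTop.mp ((hεb.and (growth hC)).and (eventually_ge_atTop 1))
  refine ⟨N, ?_⟩
  -- symmetric reduction
  suffices H : ∀ n₁ n₂, N ≤ n₁ → N ≤ n₂ → n₁ ≤ n₂ → a n₁ * a n₂ > a (n₁ + n₂) by
    intro n₁ h₁ n₂ h₂
    rcases le_total n₁ n₂ with h | h
    · exact H n₁ n₂ h₁ h₂ h
    · rw [mul_comm, Nat.add_comm]; exact H n₂ n₁ h₂ h₁ h
  intro n₁ n₂ h₁ h₂ h12
  obtain ⟨⟨hε₁, hg₁⟩, hn₁1⟩ := hN n₁ h₁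
  obtain ⟨⟨hε₂, _⟩, hn₂1⟩ := hN n₂ h₂
  obtain ⟨⟨hε₃, _⟩, _⟩ := hN (n₁ + n₂) (le_trans h₁ (Nat.le_add_right _ _))
  have hcast : ((n₁ + n₂ : ℕ) : ℝ) = (n₁ : ℝ) + (n₂ : ℝ) := by push_cast; ring
  rw [hasymp n₁ hn₁1, hasymp n₂ hn₂1, hasymp (n₁ + n₂) (le_trans hn₁1 (Nat.le_add_right _ _)),
    hcast]
  set x : ℝ := (n₁ : ℝ) with hx
  set y : ℝ := (n₂ : ℝ) with hy
  have hx1 : (1:ℝ) ≤ x := by rw [hx]; exact_mod_cast hn₁1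
  have hy1 : (1:ℝ) ≤ y := by rw [hy]; exact_mod_cast hn₂1
  have hxy : x ≤ y := by rw [hx, hy]; exact_mod_cast h12
  have hx0 : 0 < x := lt_of_lt_of_le one_pos hx1
  have hy0 : 0 < y := lt_of_lt_of_le one_pos hy1
  set p : ℝ := -(5:ℝ)/4 with hp
  set s1 := Real.sqrt (2*x/3) with hs1
  set s2 := Real.sqrt (2*y/3) with hs2
  set s12 := Real.sqrt (2*(x+y)/3) with hs12
  clear_value x y p s1 s2 s12
  -- step 1 : bound the RHS above
  have hxp : 0 < x ^ p := Real.rpow_pos_of_pos hx0 _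
  have hyp : 0 < y ^ p := Real.rpow_pos_of_pos hy0 _
  have hBp : (x+y) ^ p ≤ y ^ p :=
    Real.rpow_le_rpow_of_nonpos hy0 (by linarith) (by norm_num [hp])
  have hε₃' : 1 + ε (n₁+n₂) ≤ 3/2 := by
    have := abs_le.mp hε₃; linarith [this.2]
  have hε₁' : (1:ℝ)/2 ≤ 1 + ε n₁ := by have := abs_le.mp hε₁; linarith [this.1]
  have hε₂' : (1:ℝ)/2 ≤ 1 + ε n₂ := by have := abs_le.mp hε₂; linarith [this.1]
  have hexp12 : 0 < Real.exp (π * s12) := Real.exp_pos _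
  have hub : C * (x+y) ^ p * Real.exp (π * s12) * (1 + ε (n₁+n₂))
      ≤ C * y ^ p * Real.exp (π * s12) * (3/2) := by
    have h0 : 0 ≤ C * (x+y) ^ p * Real.exp (π * s12) := by positivity
    calc C * (x+y) ^ p * Real.exp (π * s12) * (1 + ε (n₁+n₂))
        ≤ C * (x+y) ^ p * Real.exp (π * s12) * (3/2) := by
          apply mul_le_mul_of_nonneg_left hε₃' h0
      _ = C * ((x+y) ^ p) * (Real.exp (π * s12) * (3/2)) := by ring
      _ ≤ C * (y ^ p) * (Real.exp (π * s12) * (3/2)) := by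
          apply mul_le_mul_of_nonneg_right _ (by positivity)
          exact mul_le_mul_of_nonneg_left hBp hC.le
      _ = C * y ^ p * Real.exp (π * s12) * (3/2) := by ring
  -- step 2 : bound the LHS below
  have hlb : C * x ^ p * Real.exp (π * s1) * (C * y ^ p * Real.exp (π * s2)) * (1/4)
      ≤ C * x ^ p * Real.exp (π * s1) * (1 + ε n₁) * (C * y ^ p * Real.exp (π * s2) * (1 + ε n₂)) := by
    have hq : (1:ℝ)/4 ≤ (1 + ε n₁) * (1 + ε n₂) := by nlinarith
    calc C * x ^ p * Real.exp (π * s1) * (C * y ^ p * Real.exp (π * s2)) * (1/4)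
        = (C * x ^ p * Real.exp (π * s1) * (C * y ^ p * Real.exp (π * s2))) * (1/4) := by ring
      _ ≤ (C * x ^ p * Real.exp (π * s1) * (C * y ^ p * Real.exp (π * s2)))
            * ((1 + ε n₁) * (1 + ε n₂)) := by
          apply mul_le_mul_of_nonneg_left hq (by positivity)
      _ = C * x ^ p * Real.exp (π * s1) * (1 + ε n₁)
            * (C * y ^ p * Real.exp (π * s2) * (1 + ε n₂)) := by ring
  -- step 3 : key comparison
  have hkey : C * y ^ p * Real.exp (π * s12) * (3/2)
      < C * x ^ p * Real.exp (π * s1) * (C * y ^ p * Real.exp (π * s2)) * (1/4) := by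
    have hsq : s12 ≤ s1/2 + s2 := by
      rw [hs1, hs2, hs12]; exact sqrt_key hx0.le hxy
    have hE : Real.exp (π * s12) * Real.exp (π/2 * s1) ≤ Real.exp (π * s1) * Real.exp (π * s2) := by
      rw [← Real.exp_add, ← Real.exp_add]
      apply Real.exp_le_exp.mpr
      have h := mul_le_mul_of_nonneg_left hsq Real.pi_pos.le
      linarith
    have hg : 6 < C * x ^ p * Real.exp (π/2 * s1) := hg₁
    have h2 : 0 < C * y ^ p * Real.exp (π * s12) := by positivity
    calc C * y ^ p * Real.exp (π * s12) * (3/2)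
        = (C * y ^ p * Real.exp (π * s12)) * 6 * (1/4) := by ring
      _ < (C * y ^ p * Real.exp (π * s12)) * (C * x ^ p * Real.exp (π/2 * s1)) * (1/4) := by
          have := mul_lt_mul_of_pos_left hg h2
          linarith
      _ = (C * y ^ p * (C * x ^ p)) * (Real.exp (π * s12) * Real.exp (π/2 * s1)) * (1/4) := by
          ring
      _ ≤ (C * y ^ p * (C * x ^ p)) * (Real.exp (π * s1) * Real.exp (π * s2)) * (1/4) := by
          have h3 : (0:ℝ) ≤ C * y ^ p * (C * x ^ p) := by positivity
          exact mul_le_mul_of_nonneg_right (mul_le_mul_of_nonneg_left hE h3) (by norm_num)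
      _ = C * x ^ p * Real.exp (π * s1) * (C * y ^ p * Real.exp (π * s2)) * (1/4) := by ring
  exact lt_of_le_of_lt hub (lt_of_lt_of_le hkey hlb)
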